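/- Let q ≥ 2 and k ≥ 2 be integers and set n = (q^{k−1} − 1)/(q − 1). Let α be a nonzero element of Z_q of additive order d (so d divides q and d > 1). Then for every c ∈ S_{k−1}(q), the codeword (α, c + α·𝟏, c + 2α·𝟏, …, c + (q−1)α·𝟏) of M_{k,k−1}(q) has Hamming weight 1 + (q/d)·[(d − 1)·n − Σ_{i=1}^{d−1} n(iα)] + (q/d − 1)·wt(c), where n(x) denotes the number of coordinates of c equal to x. -/

import Mathlib

/-! Write `m = q / d` and `n = |c|`. Adjoining the block `c` itself (`j = 0`) to the blocks `c + jα`,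
`1 ≤ j ≤ q - 1`, of the MacDonald word, the block `c + jα` has weight `n - n(-jα)`. As `j` runs
over `Z_q` so does `-j`, and `jα` runs `m` times through the multiples `rα`, `0 ≤ r < d`. Hence
`wt (macWord) + wt c = 1 + q n - m (n(0) + Σ_{i=1}^{d-1} n(iα))`, and `n(0) = n - wt c`,
`q = d m` give the formula. -/

/-- Hamming weight of a word over `ZMod q`: the number of nonzero coordinates. -/
def wt {q : ℕ} (l : List (ZMod q)) : ℕ := l.countP (fun x => decide (x ≠ 0))

/-- The word `(c, α, c + α·𝟏, c + 2α·𝟏, …, c + (q−1)α·𝟏)`, where `𝟏` is the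
all-ones vector of the same length as `c`. -/
def simplexWord (q : ℕ) (α : ZMod q) (c : List (ZMod q)) : List (ZMod q) :=
  c ++ α :: (List.range (q - 1)).flatMap (fun i => c.map (fun x => x + ((i + 1 : ℕ) : ZMod q) * α))

/-- The `ZMod q`-Simplex code `S_k(q)` of dimension `k`, as a set of words (lists):
`S_1(q) = ZMod q` (as length-1 words) and
`S_k(q) = {(c, α, c + α·𝟏, …, c + (q−1)α·𝟏) : c ∈ S_{k-1}(q), α ∈ ZMod q}`. -/
def simplex (q : ℕ) : ℕ → Set (List (ZMod q))
  | 0 => {[]}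
  | k + 1 => {w | ∃ c ∈ simplex q k, ∃ α : ZMod q, w = simplexWord q α c}

/-- The word `(α, c + α·𝟏, c + 2α·𝟏, …, c + (q−1)α·𝟏)`. -/
def macWord (q : ℕ) (α : ZMod q) (c : List (ZMod q)) : List (ZMod q) :=
  α :: (List.range (q - 1)).flatMap (fun i => c.map (fun x => x + ((i + 1 : ℕ) : ZMod q) * α))

/-- The `ZMod q`-MacDonald code `M_{k,k-1}(q)`, as a set of words:
`M_{k,k-1}(q) = {(α, c + α·𝟏, …, c + (q−1)α·𝟏) : α ∈ ZMod q, c ∈ S_{k-1}(q)}`. -/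
def macdonald (q k : ℕ) : Set (List (ZMod q)) :=
  {w | ∃ α : ZMod q, ∃ c ∈ simplex q (k - 1), w = macWord q α c}

open Finset

theorem Function.Periodic.sum_range_mul {M : Type*} [AddCommMonoid M] {f : ℕ → M} {d : ℕ}
    (hf : Function.Periodic f d) (m : ℕ) :
    ∑ j ∈ range (m * d), f j = m • ∑ j ∈ range d, f j := by
  induction m with
  | zero => simp
  | succ m ih =>
    rw [Nat.succ_mul, sum_range_add, ih, succ_nsmul]
    congr 1
    refine sum_congr rfl fun j _ => ?_
    rw [add_comm]
    exact_mod_cast hf.nat_mul m j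

namespace ZMod

variable {q : ℕ} {M : Type*} [AddCommMonoid M]

theorem sum_range_natCast [NeZero q] (f : ZMod q → M) : ∑ j ∈ range q, f j = ∑ x, f x :=
  sum_bij' (fun j _ => (j : ZMod q)) (fun x _ => x.val) (by simp) (by simp [ZMod.val_lt])
    (fun j hj => ZMod.val_cast_of_lt (mem_range.1 hj)) (by simp) (by simp)

theorem sum_range_natCast_neg [NeZero q] (f : ZMod q → M) :
    ∑ j ∈ range q, f (-j) = ∑ j ∈ range q, f j := by
  rw [sum_range_natCast (fun x => f (-x)), sum_range_natCast]
  exact Fintype.sum_equiv (Equiv.neg _) _ _ fun _ => rfl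

theorem addOrderOf_dvd (α : ZMod q) : addOrderOf α ∣ q :=
  addOrderOf_dvd_of_nsmul_eq_zero (by simp)

theorem sum_range_natCast_mul (f : ZMod q → M) (α : ZMod q) :
    ∑ j ∈ range q, f (j * α) = (q / addOrderOf α) • ∑ j ∈ range (addOrderOf α), f (j * α) := by
  have hperiodic : Function.Periodic (fun j : ℕ => f (j * α)) (addOrderOf α) := fun j => by
    simp only [Nat.cast_add, add_mul, ← nsmul_eq_mul, addOrderOf_nsmul_eq_zero, add_zero]
  have h := hperiodic.sum_range_mul (q / addOrderOf α)
  rwa [Nat.div_mul_cancel (addOrderOf_dvd α)] at h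

end ZMod

theorem length_of_mem_simplex {q m : ℕ} (hq : q ≠ 0) {c : List (ZMod q)} (hc : c ∈ simplex q m) :
    (q - 1) * c.length + 1 = q ^ m := by
  obtain ⟨e, rfl⟩ : ∃ e, q = e + 1 := ⟨q - 1, by omega⟩
  induction m generalizing c with
  | zero => simp [show c = [] from hc]
  | succ m ih =>
    obtain ⟨c, hc, β, rfl⟩ := hc
    simp only [simplexWord, List.length_append, List.length_cons, List.length_flatMap,
      List.map_const', List.length_map, List.sum_replicate, List.length_range, smul_eq_mul,
      Nat.add_sub_cancel, pow_succ, ← ih hc]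
    ring

section Weight

variable {q : ℕ}

theorem wt_map_add_add_count_neg (c : List (ZMod q)) (β : ZMod q) :
    wt (c.map (· + β)) + c.count (-β) = c.length := by
  rw [wt, List.countP_map, List.count_eq_countP, List.length_eq_countP_add_countP (· == -β),
    add_comm]
  congr 2
  funext x
  simp [add_eq_zero_iff_eq_neg]

theorem wt_add_count_zero (c : List (ZMod q)) : wt c + c.count 0 = c.length := by
  simpa using wt_map_add_add_count_neg c 0

theorem sum_range_wt_map_add [NeZero q] (c : List (ZMod q)) (α : ZMod q) :
    ∑ j ∈ range q, wt (c.map (· + (j : ZMod q) * α))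
      + (q / addOrderOf α) • ∑ j ∈ range (addOrderOf α), c.count ((j : ZMod q) * α)
      = q * c.length := by
  rw [← ZMod.sum_range_natCast_mul c.count, ← ZMod.sum_range_natCast_neg (fun x => c.count (x * α)),
    ← sum_add_distrib]
  simp only [neg_mul, wt_map_add_add_count_neg, sum_const, card_range, smul_eq_mul]

theorem wt_macWord_add_wt [NeZero q] {α : ZMod q} (hα : α ≠ 0) (c : List (ZMod q)) :
    wt (macWord q α c) + wt c = 1 + ∑ j ∈ range q, wt (c.map (· + (j : ZMod q) * α)) := by
  have hblocks : wt ((List.range (q - 1)).flatMap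
      (fun i => c.map (fun x => x + ((i + 1 : ℕ) : ZMod q) * α)))
      = ∑ i ∈ range (q - 1), wt (c.map (· + ((i + 1 : ℕ) : ZMod q) * α)) := by
    rw [wt, List.countP_flatMap, Finset.sum, range_val, Multiset.range, Multiset.map_coe,
      Multiset.sum_coe]
    rfl
  rw [macWord, wt, List.countP_cons_of_pos (by simpa using hα), ← wt, hblocks,
    show range q = range (q - 1 + 1) by rw [Nat.sub_add_cancel NeZero.one_le], sum_range_succ']
  simp only [Nat.cast_zero, zero_mul, add_zero, List.map_id']
  ring

end Weight

theorem macdonald_nonunit_weight_general (q k : ℕ) (hq : 2 ≤ q)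
    (α : ZMod q) (hα : α ≠ 0) (d : ℕ) (hd : addOrderOf α = d)
    (c : List (ZMod q)) (hc : c ∈ simplex q (k - 1)) :
    wt (macWord q α c) =
      1 + (q / d) * ((d - 1) * ((q ^ (k - 1) - 1) / (q - 1))
            - ∑ i ∈ Finset.Icc 1 (d - 1), c.count ((i : ZMod q) * α))
        + (q / d - 1) * wt c := by
  have : NeZero q := ⟨by omega⟩
  have hn : (q ^ (k - 1) - 1) / (q - 1) = c.length := by
    rw [← length_of_mem_simplex (NeZero.ne q) hc, Nat.add_sub_cancel,
      Nat.mul_div_cancel_left _ (by omega)]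
  obtain ⟨e, rfl⟩ : ∃ e, d = e + 1 := ⟨d - 1, by have := hd ▸ addOrderOf_pos α; omega⟩
  have hdq : (e + 1) * (q / (e + 1)) = q := Nat.mul_div_cancel' (hd ▸ ZMod.addOrderOf_dvd α)
  have hm : 1 ≤ q / (e + 1) := Nat.div_pos (Nat.le_of_dvd (by omega) ⟨_, hdq.symm⟩) e.succ_pos
  have hsplit : ∑ j ∈ range (e + 1), c.count ((j : ZMod q) * α)
      = c.count 0 + ∑ i ∈ Icc 1 e, c.count ((i : ZMod q) * α) := by
    rw [range_eq_Ico, sum_eq_sum_Ico_succ_bot (by omega : 0 < e + 1), Ico_add_one_right_eq_Icc]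
    simp
  have hS : ∑ i ∈ Icc 1 e, c.count ((i : ZMod q) * α) ≤ e * c.length :=
    (sum_le_sum fun _ _ => List.count_le_length).trans (by simp)
  have hblocks := sum_range_wt_map_add c α
  rw [hd, hsplit, smul_eq_mul] at hblocks
  have hmac := wt_macWord_add_wt hα c
  have hzero := wt_add_count_zero c
  rw [hn, Nat.add_sub_cancel]
  set m := q / (e + 1)
  zify [hS, hm] at *
  linear_combination hmac + hblocks - (m : ℤ) * hzero - (c.length : ℤ) * hdq

/-- For a nonzero `α ∈ ZMod q` of additive order `d` and `c ∈ S_{k−1}(q)`, the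
codeword `(α, c + α·𝟏, …, c + (q−1)α·𝟏)` of `M_{k,k−1}(q)` has Hamming weight
`1 + (q/d)·[(d − 1)·n − Σ_{i=1}^{d−1} n(iα)] + (q/d − 1)·wt(c)`, where
`n = (q^{k−1} − 1)/(q − 1)` and `n(x)` is the number of coordinates of `c` equal to `x`. -/
theorem macdonald_nonunit_weight (q k : ℕ) (hq : 2 ≤ q) (hk : 2 ≤ k)
    (α : ZMod q) (hα : α ≠ 0) (d : ℕ) (hd : addOrderOf α = d)
    (c : List (ZMod q)) (hc : c ∈ simplex q (k - 1)) :
    wt (macWord q α c) =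
      1 + (q / d) * ((d - 1) * ((q ^ (k - 1) - 1) / (q - 1))
            - ∑ i ∈ Finset.Icc 1 (d - 1), c.count ((i : ZMod q) * α))
        + (q / d - 1) * wt c :=
  macdonald_nonunit_weight_general q k hq α hα d hd c hc
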